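/- arXiv:2310.13331 — 2 statements merged into one kernel-verified Lean document; each statement's English description precedes it below -/
import Mathlib

section
/- The matrix-valued function L(z,λ) = [[1,0],[λ^{-1} log(z/2), 1]] · [[y_0, λ z (y_0)_z],[ (1/4) y_1, y_0 + (λ z/4) (y_1)_z]] satisfies L^{-1} dL = λ^{-1} [[0, z^3],[z^{-1}, 0]] dz on ℂ − (−∞, 0]. -/
/-!
Both `y₀` and `y₁` are power series in `w = z⁴` with infinite radius of convergence, so they may
be differentiated termwise. Two of the four entries of the matrix equation are pure algebra, using
`(log (z/2))' = 1/z`; the other two are the second-order equations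
`(z y₀')' = λ⁻² z³ y₀` and `(z y₁')' = λ⁻¹ (λ⁻¹ z³ y₁ - 8 y₀')`.
For the coefficients `cₙ = λ⁻²ⁿ / (16ⁿ (n!)²)` of `y₀` they are the recursion
`16 (n+1)² cₙ₊₁ = λ⁻² cₙ`, and for the coefficients `-2 λ⁻¹ Hₙ cₙ` of `y₁` the same recursion
combined with `Hₙ₊₁ = Hₙ + 1/(n+1)`.
-/

open Complex Matrix

def EntireCoeffs (c : ℕ → ℂ) : Prop := ∀ r : ℝ, 0 ≤ r → Summable fun n => ‖c n‖ * r ^ n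

noncomputable def powerSum (c : ℕ → ℂ) (w : ℂ) : ℂ := ∑' n, c n * w ^ n

def derivCoeff (c : ℕ → ℂ) (n : ℕ) : ℂ := (n + 1) * c (n + 1)

def eulerCoeff (c : ℕ → ℂ) (n : ℕ) : ℂ := n * c n

section PowerSeries

variable {c d : ℕ → ℂ}

theorem EntireCoeffs.summable (hc : EntireCoeffs c) (w : ℂ) : Summable fun n => c n * w ^ n :=
  .of_norm_bounded (hc ‖w‖ (norm_nonneg w)) fun n => by rw [norm_mul, norm_pow]

theorem EntireCoeffs.of_norm_le (hc : EntireCoeffs c) {K ρ : ℝ} (hρ : 0 ≤ ρ)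
    (h : ∀ n, ‖d n‖ ≤ K * ρ ^ n * ‖c n‖) : EntireCoeffs d := by
  intro r hr
  refine .of_nonneg_of_le (fun n => by positivity) (fun n => ?_)
    ((hc (ρ * r) (by positivity)).mul_left K)
  calc ‖d n‖ * r ^ n ≤ K * ρ ^ n * ‖c n‖ * r ^ n := by gcongr; exact h n
    _ = K * (‖c n‖ * (ρ * r) ^ n) := by ring

theorem EntireCoeffs.euler (hc : EntireCoeffs c) : EntireCoeffs (eulerCoeff c) :=
  hc.of_norm_le zero_le_two fun n => by
    rw [eulerCoeff, norm_mul, Complex.norm_natCast, one_mul]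
    gcongr
    exact_mod_cast n.lt_two_pow_self.le

theorem EntireCoeffs.deriv (hc : EntireCoeffs c) : EntireCoeffs (derivCoeff c) := by
  intro r hr
  set R := max r 1
  refine .of_nonneg_of_le (fun n => by positivity) (fun n => ?_)
    ((summable_nat_add_iff 1).2 (hc (2 * R) (by positivity)))
  have hn : ((n : ℝ) + 1) ≤ 2 ^ (n + 1) := by exact_mod_cast (n + 1).lt_two_pow_self.le
  have hr : r ^ n ≤ R ^ (n + 1) :=
    (pow_le_pow_left₀ hr (le_max_left r 1) n).trans (pow_le_pow_right₀ (le_max_right r 1) n.le_succ)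
  calc ‖derivCoeff c n‖ * r ^ n = ((n : ℝ) + 1) * ‖c (n + 1)‖ * r ^ n := by
        rw [derivCoeff, norm_mul]; norm_cast
    _ ≤ 2 ^ (n + 1) * ‖c (n + 1)‖ * R ^ (n + 1) := by gcongr
    _ = ‖c (n + 1)‖ * (2 * R) ^ (n + 1) := by ring

theorem EntireCoeffs.hasDerivAt_powerSum (hc : EntireCoeffs c) (w : ℂ) :
    HasDerivAt (powerSum c) (powerSum (derivCoeff c) w) w := by
  set R := ‖w‖ + 1
  have hu : Summable fun n => n * ‖c n‖ * R ^ (n - 1) := by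
    refine (summable_nat_add_iff 1).1 ?_
    have := hc.deriv R (by positivity)
    simp only [derivCoeff, norm_mul] at this
    norm_cast at this ⊢
  have hbound : ∀ n, ∀ v ∈ Metric.ball (0 : ℂ) R,
      ‖n * c n * v ^ (n - 1)‖ ≤ n * ‖c n‖ * R ^ (n - 1) := by
    intro n v hv
    rw [mem_ball_zero_iff] at hv
    rw [norm_mul, norm_mul, norm_pow, Complex.norm_natCast]
    gcongr
  have hw : w ∈ Metric.ball (0 : ℂ) R := by simp [R]
  have h := hasDerivAt_tsum_of_isPreconnected hu Metric.isOpen_ball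
    (convex_ball (0 : ℂ) R).isPreconnected (g := fun n v => c n * v ^ n)
    (g' := fun n v => n * c n * v ^ (n - 1))
    (fun n v _ => ((hasDerivAt_pow n v).const_mul (c n)).congr_deriv (by ring))
    hbound (Metric.mem_ball_self (by positivity : (0 : ℝ) < R)) (hc.summable 0) hw
  refine h.congr_deriv ?_
  rw [tsum_eq_zero_add' ?_]
  · simp [powerSum, derivCoeff]
  · simpa [derivCoeff] using hc.deriv.summable w

theorem powerSum_eq_linear_comb {a b e : ℕ → ℂ} (hb : EntireCoeffs b) (he : EntireCoeffs e)
    {α β : ℂ} (h : ∀ n, a n = α * b n + β * e n) (w : ℂ) :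
    powerSum a w = α * powerSum b w + β * powerSum e w := by
  simp_rw [powerSum, h, add_mul, mul_assoc]
  rw [((hb.summable w).mul_left α).tsum_add ((he.summable w).mul_left β), tsum_mul_left,
    tsum_mul_left]

theorem powerSum_const_mul (α : ℂ) (w : ℂ) :
    powerSum (fun n => α * c n) w = α * powerSum c w := by
  simp_rw [powerSum, mul_assoc]
  exact tsum_mul_left

theorem EntireCoeffs.mul_powerSum_derivCoeff (hc : EntireCoeffs c) (w : ℂ) :
    w * powerSum (derivCoeff c) w = powerSum (eulerCoeff c) w := by
  have hshift : (fun n => eulerCoeff c (n + 1) * w ^ (n + 1)) =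
      fun n => w * (derivCoeff c n * w ^ n) := by
    ext n; simp only [eulerCoeff, derivCoeff]; push_cast; ring
  rw [powerSum, powerSum, tsum_eq_zero_add' (f := fun n => eulerCoeff c n * w ^ n)
    (by rw [hshift]; exact (hc.deriv.summable w).mul_left w), hshift, tsum_mul_left]
  simp [eulerCoeff]

theorem EntireCoeffs.hasDerivAt_powerSum_comp_pow (hc : EntireCoeffs c) (k : ℕ) (z : ℂ) :
    HasDerivAt (fun z => powerSum c (z ^ k))
      (k * z ^ (k - 1) * powerSum (derivCoeff c) (z ^ k)) z :=
  ((hc.hasDerivAt_powerSum (z ^ k)).comp z (hasDerivAt_pow k z)).congr_deriv (by ring)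

theorem mul_deriv_powerSum_comp_pow (hc : EntireCoeffs c) (k : ℕ) (z : ℂ) :
    z * deriv (fun z => powerSum c (z ^ k)) z = k * powerSum (eulerCoeff c) (z ^ k) := by
  rw [(hc.hasDerivAt_powerSum_comp_pow k z).deriv, ← hc.mul_powerSum_derivCoeff]
  rcases k with _ | k
  · simp
  · simp only [Nat.add_sub_cancel, pow_succ]; ring

theorem hasDerivAt_mul_deriv_powerSum_comp_pow (hc : EntireCoeffs c) (k : ℕ) (z : ℂ) :
    HasDerivAt (fun w => w * deriv (fun z => powerSum c (z ^ k)) w)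
      (k ^ 2 * z ^ (k - 1) * powerSum (derivCoeff (eulerCoeff c)) (z ^ k)) z := by
  simp_rw [mul_deriv_powerSum_comp_pow hc]
  exact ((hc.euler.hasDerivAt_powerSum_comp_pow k z).const_mul (k : ℂ)).congr_deriv (by ring)

end PowerSeries

theorem harmonic_le_self (n : ℕ) : harmonic n ≤ n := by
  induction n with
  | zero => simp
  | succ n ih =>
    rw [harmonic_succ]
    push_cast
    linarith [inv_le_one_of_one_le₀ (by linarith [n.cast_nonneg (α := ℚ)] : (1 : ℚ) ≤ n + 1)]

theorem norm_harmonic_le_two_pow (n : ℕ) : ‖((harmonic n : ℚ) : ℂ)‖ ≤ 2 ^ n := by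
  have h0 : (0 : ℚ) ≤ harmonic n := Finset.sum_nonneg fun i _ => by positivity
  rw [norm_ratCast, abs_of_nonneg (by exact_mod_cast h0)]
  exact_mod_cast (harmonic_le_self n).trans (by exact_mod_cast n.lt_two_pow_self.le)

section Bessel

variable (lam : ℂ)

noncomputable def besselCoeff (n : ℕ) : ℂ := lam⁻¹ ^ (2 * n) / (16 ^ n * (n.factorial : ℂ) ^ 2)

noncomputable def besselLogCoeff (n : ℕ) : ℂ :=
  -2 * lam⁻¹ * ((harmonic n : ℚ) : ℂ) * besselCoeff lam n

theorem entireCoeffs_besselCoeff : EntireCoeffs (besselCoeff lam) := by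
  intro r hr
  set x := ‖lam⁻¹‖ ^ 2 * r / 16
  refine .of_nonneg_of_le (fun n => by positivity) (fun n => ?_) (Real.summable_pow_div_factorial x)
  have hf : (1 : ℝ) ≤ n.factorial := by exact_mod_cast n.factorial_pos
  calc ‖besselCoeff lam n‖ * r ^ n = x ^ n / (n.factorial : ℝ) ^ 2 := by
        rw [besselCoeff, norm_div, norm_mul, norm_pow, norm_pow, norm_pow, Complex.norm_natCast,
          pow_mul]
        simp only [x, div_pow, mul_pow]
        norm_num
        ring
    _ ≤ x ^ n / n.factorial := by
        gcongr
        nlinarith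

theorem entireCoeffs_besselLogCoeff : EntireCoeffs (besselLogCoeff lam) :=
  (entireCoeffs_besselCoeff lam).of_norm_le zero_le_two (K := 2 * ‖lam⁻¹‖) fun n => by
    rw [besselLogCoeff, norm_mul, norm_mul, norm_mul, norm_neg, Complex.norm_ofNat]
    gcongr
    exact norm_harmonic_le_two_pow n

theorem besselCoeff_succ (n : ℕ) :
    16 * ((n : ℂ) + 1) ^ 2 * besselCoeff lam (n + 1) = lam⁻¹ ^ 2 * besselCoeff lam n := by
  have hf : (n.factorial : ℂ) ≠ 0 := by exact_mod_cast n.factorial_ne_zero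
  have hn : (n : ℂ) + 1 ≠ 0 := by exact_mod_cast n.succ_ne_zero
  rw [besselCoeff, besselCoeff, Nat.factorial_succ, mul_add_one, pow_add, pow_succ]
  push_cast
  field_simp
  ring

theorem derivCoeff_eulerCoeff_besselCoeff :
    derivCoeff (eulerCoeff (besselCoeff lam)) = fun n => lam⁻¹ ^ 2 / 16 * besselCoeff lam n := by
  ext n
  simp only [derivCoeff, eulerCoeff]
  push_cast
  linear_combination besselCoeff_succ lam n / 16

theorem derivCoeff_eulerCoeff_besselLogCoeff (n : ℕ) :
    derivCoeff (eulerCoeff (besselLogCoeff lam)) n =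
      lam⁻¹ ^ 2 / 16 * besselLogCoeff lam n + -2 * lam⁻¹ * derivCoeff (besselCoeff lam) n := by
  have hinv : ((n : ℂ) + 1) * ((n : ℂ) + 1)⁻¹ = 1 :=
    mul_inv_cancel₀ (by exact_mod_cast n.succ_ne_zero)
  simp only [derivCoeff, eulerCoeff, besselLogCoeff, harmonic_succ]
  push_cast
  linear_combination (-lam⁻¹ * ((harmonic n : ℚ) : ℂ) / 8) * besselCoeff_succ lam n
    + (-2 * lam⁻¹ * ((n : ℂ) + 1) * besselCoeff lam (n + 1)) * hinv

noncomputable def besselFun (z : ℂ) : ℂ := powerSum (besselCoeff lam) (z ^ 4)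

noncomputable def besselLogFun (z : ℂ) : ℂ := powerSum (besselLogCoeff lam) (z ^ 4)

theorem besselFun_apply (z : ℂ) :
    besselFun lam z = ∑' j : ℕ, lam⁻¹ ^ (2 * j) * z ^ (4 * j) / (16 ^ j * (j.factorial : ℂ) ^ 2) :=
  tsum_congr fun j => by rw [besselCoeff, pow_mul z]; ring

theorem besselLogFun_apply (z : ℂ) :
    besselLogFun lam z = -2 * lam⁻¹ * ∑' j : ℕ, ((harmonic (j + 1) : ℚ) : ℂ) *
      lam⁻¹ ^ (2 * (j + 1)) * z ^ (4 * (j + 1)) / (16 ^ (j + 1) * ((j + 1).factorial : ℂ) ^ 2) := by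
  rw [besselLogFun, powerSum, tsum_eq_zero_add'
    ((summable_nat_add_iff 1).2 ((entireCoeffs_besselLogCoeff lam).summable _)), ← tsum_mul_left]
  simp only [besselLogCoeff, harmonic_zero, Rat.cast_zero, mul_zero, zero_mul, zero_add]
  exact tsum_congr fun j => by rw [besselCoeff, pow_mul z]; ring

theorem hasDerivAt_mul_deriv_besselFun (z : ℂ) :
    HasDerivAt (fun w => w * deriv (besselFun lam) w) (lam⁻¹ ^ 2 * z ^ 3 * besselFun lam z) z := by
  have h := hasDerivAt_mul_deriv_powerSum_comp_pow (entireCoeffs_besselCoeff lam) 4 z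
  rw [derivCoeff_eulerCoeff_besselCoeff, powerSum_const_mul] at h
  exact h.congr_deriv (by rw [besselFun]; push_cast; ring)

theorem hasDerivAt_mul_deriv_besselLogFun (z : ℂ) :
    HasDerivAt (fun w => w * deriv (besselLogFun lam) w)
      (lam⁻¹ * (lam⁻¹ * z ^ 3 * besselLogFun lam z - 8 * deriv (besselFun lam) z)) z := by
  have hc := entireCoeffs_besselCoeff lam
  have h := hasDerivAt_mul_deriv_powerSum_comp_pow (entireCoeffs_besselLogCoeff lam) 4 z
  rw [powerSum_eq_linear_comb (entireCoeffs_besselLogCoeff lam) hc.deriv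
    (derivCoeff_eulerCoeff_besselLogCoeff lam)] at h
  have hd : deriv (besselFun lam) z = _ := (hc.hasDerivAt_powerSum_comp_pow 4 z).deriv
  refine h.congr_deriv ?_
  rw [besselLogFun, hd]
  push_cast
  ring

end Bessel

noncomputable def logFrame (lam : ℂ) (y₀ y₁ : ℂ → ℂ) (z : ℂ) : Matrix (Fin 2) (Fin 2) ℂ :=
  !![1, 0; lam⁻¹ * log (z / 2), 1] *
    !![y₀ z, lam * z * deriv y₀ z; (1 / 4) * y₁ z, y₀ z + lam * z * (1 / 4) * deriv y₁ z]

theorem hasDerivAt_log_div_two {z : ℂ} (hz : z ∈ slitPlane) :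
    HasDerivAt (fun w => log (w / 2)) z⁻¹ z := by
  have hz2 : z / 2 ∈ slitPlane := by
    rw [mem_slitPlane_iff, div_ofNat_re, div_ofNat_im] at *
    rcases hz with h | h
    · exact .inl (by linarith)
    · exact .inr (by simpa using h)
  have hz0 : z ≠ 0 := slitPlane_ne_zero hz
  exact (((hasDerivAt_id' z).div_const 2).clog hz2).congr_deriv (by field_simp)

theorem hasDerivAt_logFrame_apply {lam : ℂ} (hlam : lam ≠ 0) {y₀ y₁ : ℂ → ℂ} {z : ℂ}
    (hz : z ∈ slitPlane) (h₀ : DifferentiableAt ℂ y₀ z) (h₁ : DifferentiableAt ℂ y₁ z)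
    (hode₀ : HasDerivAt (fun w => w * deriv y₀ w) (lam⁻¹ ^ 2 * z ^ 3 * y₀ z) z)
    (hode₁ : HasDerivAt (fun w => w * deriv y₁ w)
      (lam⁻¹ * (lam⁻¹ * z ^ 3 * y₁ z - 8 * deriv y₀ z)) z) (i j : Fin 2) :
    HasDerivAt (fun w => logFrame lam y₀ y₁ w i j)
      ((logFrame lam y₀ y₁ z * (lam⁻¹ • !![0, z ^ 3; z⁻¹, 0])) i j) z := by
  have hz0 : z ≠ 0 := slitPlane_ne_zero hz
  have hℓ : HasDerivAt (fun w => lam⁻¹ * log (w / 2)) (lam⁻¹ * z⁻¹) z :=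
    (hasDerivAt_log_div_two hz).const_mul _
  have hA : HasDerivAt (fun w => lam * w * deriv y₀ w) (lam⁻¹ * z ^ 3 * y₀ z) z := by
    simpa only [mul_assoc] using (hode₀.const_mul lam).congr_deriv (by field_simp)
  have hB : HasDerivAt (fun w => lam * w * 4⁻¹ * deriv y₁ w)
      (4⁻¹ * (lam⁻¹ * z ^ 3 * y₁ z - 8 * deriv y₀ z)) z := by
    simpa only [mul_assoc, mul_comm (4⁻¹ : ℂ)] using
      (hode₁.const_mul (lam * 4⁻¹)).congr_deriv (by field_simp)
  fin_cases i <;> fin_cases j <;>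
    simp only [logFrame, one_div, Fin.zero_eta, Fin.mk_one, Fin.isValue, Matrix.mul_apply,
      of_apply, cons_val', cons_val_fin_one, cons_val_zero, cons_val_one, Fin.sum_univ_two,
      one_mul, zero_mul, add_zero, zero_add, mul_zero, cons_mul, Nat.succ_eq_add_one,
      Nat.reduceAdd, vecMul_cons, head_cons, one_smul, tail_cons, zero_smul, empty_vecMul,
      smul_cons, smul_eq_mul, smul_empty, add_cons, empty_add_empty, empty_mul,
      Equiv.symm_apply_apply, smul_of]
  · exact h₀.hasDerivAt.congr_deriv (by field_simp)
  · exact hA.congr_deriv (by ring)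
  · exact ((hℓ.mul h₀.hasDerivAt).add (h₁.hasDerivAt.const_mul 4⁻¹)).congr_deriv
      (by field_simp; ring)
  · exact ((hℓ.mul hA).add (h₀.hasDerivAt.add hB)).congr_deriv (by field_simp; ring)

/-- The matrix-valued function
`L(z,λ) = [[1,0],[λ⁻¹ log(z/2), 1]] · [[y₀, λ z y₀'],[y₁/4, y₀ + (λ z/4) y₁']]`
satisfies `L⁻¹ dL = λ⁻¹ [[0, z³],[z⁻¹, 0]] dz` on `ℂ − (−∞, 0]`, i.e. the
(entrywise) matrix ODE `L_z = L · λ⁻¹ [[0,z³],[z⁻¹,0]]`. -/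
theorem stmt3 (lam : ℂ) (hlam : lam ≠ 0)
    (y₀ y₁ : ℂ → ℂ)
    (hy₀ : ∀ z : ℂ, y₀ z = ∑' j : ℕ, lam⁻¹ ^ (2 * j) * z ^ (4 * j) /
      (16 ^ j * ((Nat.factorial j : ℂ)) ^ 2))
    (hy₁ : ∀ z : ℂ, y₁ z = (-2) * lam⁻¹ *
      ∑' j : ℕ, ((harmonic (j + 1) : ℚ) : ℂ) * lam⁻¹ ^ (2 * (j + 1)) * z ^ (4 * (j + 1)) /
        (16 ^ (j + 1) * ((Nat.factorial (j + 1) : ℂ)) ^ 2))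
    (L : ℂ → Matrix (Fin 2) (Fin 2) ℂ)
    (hL : ∀ z : ℂ, L z =
      !![(1 : ℂ), 0; lam⁻¹ * Complex.log (z / 2), 1] *
      !![y₀ z, lam * z * deriv y₀ z;
         (1 / 4) * y₁ z, y₀ z + lam * z * (1 / 4) * deriv y₁ z]) :
    ∀ z : ℂ, z ∈ Complex.slitPlane → ∀ i j : Fin 2,
      HasDerivAt (fun w => L w i j)
        ((L z * (lam⁻¹ • !![(0 : ℂ), z ^ 3; z⁻¹, 0])) i j) z := by
  obtain rfl : y₀ = besselFun lam := funext fun z => (hy₀ z).trans (besselFun_apply lam z).symm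
  obtain rfl : y₁ = besselLogFun lam :=
    funext fun z => (hy₁ z).trans (besselLogFun_apply lam z).symm
  obtain rfl : L = logFrame lam (besselFun lam) (besselLogFun lam) := funext hL
  intro z hz
  exact hasDerivAt_logFrame_apply hlam hz
    ((entireCoeffs_besselCoeff lam).hasDerivAt_powerSum_comp_pow 4 z).differentiableAt
    ((entireCoeffs_besselLogCoeff lam).hasDerivAt_powerSum_comp_pow 4 z).differentiableAt
    (hasDerivAt_mul_deriv_besselFun lam z) (hasDerivAt_mul_deriv_besselLogFun lam z)
end

section
/- Conversely: if g(λ) = conj(φ(1/conj(λ)))^T diag(1,−1) φ(λ) admits a Birkhoff factorization g = B_− diag(1,−1) B_+ with B_± ∈ (Λ^± SL_2ℂ)_σ and B_+ ∈ (Λ^{+,>0} SL_2ℂ)_σ, then conj(B_+(1/conj(λ)))^T = B_−(λ) Θ for a constant diagonal matrix Θ = diag(k, k^{-1}) with k ∈ ℝ, k ≠ 0. -/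
open Complex Matrix Metric

attribute [local instance] Matrix.normedAddCommGroup Matrix.normedSpace

/-!
On the unit circle `(conj λ)⁻¹ = λ`, so `g = φᴴ J φ` is Hermitian there and the factorization
gives `B₋ J B₊ = B₊ᴴ J B₋ᴴ`. Hence `Θ(λ) := B₋(λ)⁻¹ B₊((conj λ)⁻¹)ᴴ`, which is holomorphic outside
the disk, agrees on the circle with `J B₊(λ) (B₋((conj λ)⁻¹)ᴴ)⁻¹ J`, which is holomorphic inside,
so `Θ` is constant. Evaluating at `λ = ±1` the twisting condition gives `J Θ J = Θ`, so `Θ` is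
diagonal; the Hermitian symmetry gives `J Θᴴ J = Θ`, so its entries are real; and `det Θ = 1`.

For the constancy: if `u` and `w` are holomorphic inside and `u = conj w` on the circle, then
`u + w` and `i (u - w)` are real on the circle. A holomorphic `f` that is real on the circle is real
inside (maximum modulus for `exp (± i f)`), hence constant by the open mapping theorem.
-/

open scoped ComplexConjugate

namespace Complex

variable {U : Set ℂ} {f u w : ℂ → ℂ}

theorem im_eq_zero_on_closure_of_im_eq_zero_on_frontier (hU : Bornology.IsBounded U)
    (hf : DiffContOnCl ℂ f U) (h : ∀ z ∈ frontier U, (f z).im = 0) :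
    ∀ z ∈ closure U, (f z).im = 0 := by
  have hexp : ∀ c : ℝ, ∀ z ∈ closure U, ‖exp (c * I * f z)‖ ≤ 1 := by
    intro c z hz
    refine norm_le_of_forall_mem_frontier_norm_le hU
      ((differentiable_exp.comp (differentiable_id.const_mul (c * I))).comp_diffContOnCl hf)
      (fun ζ hζ => ?_) hz
    simp [norm_exp, h ζ hζ]
  intro z hz
  have h₁ := hexp 1 z hz
  have h₂ := hexp (-1) z hz
  simp only [norm_exp, Real.exp_le_one_iff, mul_re, mul_im, I_re, I_im] at h₁ h₂
  norm_num at h₁ h₂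
  linarith

theorem exists_eq_const_on_closure_of_im_eq_zero_on_frontier (hU : Bornology.IsBounded U)
    (hUo : IsOpen U) (hUc : IsConnected U) (hf : DiffContOnCl ℂ f U)
    (h : ∀ z ∈ frontier U, (f z).im = 0) : ∃ c, ∀ z ∈ closure U, f z = c := by
  obtain ⟨c, hc⟩ := (hf.differentiableOn.analyticOnNhd hUo).eq_const_of_im_eq_const
    (fun z hz => im_eq_zero_on_closure_of_im_eq_zero_on_frontier hU hf h z (subset_closure hz))
    hUo hUc
  exact ⟨c, fun z hz => Set.EqOn.of_subset_closure hc hf.continuousOn continuousOn_const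
    subset_closure subset_rfl hz⟩

theorem exists_eq_const_on_closure_of_eq_conj_on_frontier (hU : Bornology.IsBounded U)
    (hUo : IsOpen U) (hUc : IsConnected U) (hu : DiffContOnCl ℂ u U) (hw : DiffContOnCl ℂ w U)
    (h : ∀ z ∈ frontier U, u z = conj (w z)) : ∃ c, ∀ z ∈ closure U, u z = c := by
  obtain ⟨a, ha⟩ := exists_eq_const_on_closure_of_im_eq_zero_on_frontier hU hUo hUc
    (hu.add hw) (fun z hz => by simp [h z hz])
  obtain ⟨b, hb⟩ := exists_eq_const_on_closure_of_im_eq_zero_on_frontier hU hUo hUc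
    ((hu.sub hw).const_smul I) (fun z hz => by simp [h z hz])
  refine ⟨(a - I * b) / 2, fun z hz => ?_⟩
  have ha' := ha z hz
  have hb' := hb z hz
  simp only [Pi.add_apply, Pi.sub_apply, Pi.smul_apply, smul_eq_mul] at ha' hb'
  linear_combination ha' / 2 - I * hb' / 2 + (u z - w z) / 2 * I_sq

theorem inv_conj_eq_self_of_mem_sphere {z : ℂ} (hz : z ∈ sphere (0 : ℂ) 1) :
    (conj z)⁻¹ = z := by
  rw [← RCLike.inv_eq_conj (mem_sphere_zero_iff_norm.mp hz), inv_inv]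

theorem preimage_conj_ball_zero (r : ℝ) : conj ⁻¹' ball (0 : ℂ) r = ball 0 r := by
  ext z; simp

end Complex

section DiffContOnCl

variable {F : Type*} [NormedAddCommGroup F] [NormedSpace ℂ F] [StarAddMonoid F]
  [StarModule ℂ F] [ContinuousStar F]

theorem DiffContOnCl.star_comp_conj {f : ℂ → F} {U : Set ℂ} (hUo : IsOpen U)
    (hU : conj ⁻¹' U = U) (hf : DiffContOnCl ℂ f U) :
    DiffContOnCl ℂ (fun z => star (f (conj z))) U := by
  have hcl : Set.MapsTo conj (closure U) (closure U) := by
    intro z hz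
    have := continuous_conj.closure_preimage_subset U
    rw [hU] at this
    exact this hz
  refine ⟨fun z hz => ?_, ?_⟩
  · exact (differentiableAt_star_conj_iff.2
      (hf.differentiableAt hUo (show z ∈ conj ⁻¹' U from hU.symm ▸ hz))).differentiableWithinAt
  · exact continuous_star.comp_continuousOn (hf.continuousOn.comp continuous_conj.continuousOn hcl)

variable {m n : Type*} [Fintype m] [Fintype n] {U : Set ℂ}

theorem diffContOnCl_matrix_iff {A : ℂ → Matrix m n ℂ} :
    DiffContOnCl ℂ A U ↔ ∀ i j, DiffContOnCl ℂ (fun z => A z i j) U :=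
  ⟨fun h i j => ⟨differentiableOn_pi.1 (differentiableOn_pi.1 h.1 i) j,
      continuousOn_pi.1 (continuousOn_pi.1 h.2 i) j⟩,
    fun h => ⟨differentiableOn_pi.2 fun i => differentiableOn_pi.2 fun j => (h i j).1,
      continuousOn_pi.2 fun i => continuousOn_pi.2 fun j => (h i j).2⟩⟩

theorem DiffContOnCl.matrix_mul {l : Type*} [Fintype l] {A : ℂ → Matrix l m ℂ}
    {B : ℂ → Matrix m n ℂ} (hA : DiffContOnCl ℂ A U) (hB : DiffContOnCl ℂ B U) :
    DiffContOnCl ℂ (fun z => A z * B z) U := by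
  rw [diffContOnCl_matrix_iff] at hA hB ⊢
  intro i j
  simp only [mul_apply]
  exact ⟨DifferentiableOn.fun_sum fun k _ => (hA i k).1.mul (hB k j).1,
    continuousOn_finsetSum _ fun k _ => (hA i k).2.mul (hB k j).2⟩

theorem DiffContOnCl.matrix_det [DecidableEq n] {A : ℂ → Matrix n n ℂ}
    (hA : DiffContOnCl ℂ A U) : DiffContOnCl ℂ (fun z => (A z).det) U := by
  rw [diffContOnCl_matrix_iff] at hA
  simp only [det_apply]
  exact ⟨DifferentiableOn.fun_sum fun σ _ =>
      (DifferentiableOn.fun_finsetProd fun i _ => (hA (σ i) i).1).const_smul _,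
    continuousOn_finsetSum _ fun σ _ =>
      (continuousOn_finsetProd _ fun i _ => (hA (σ i) i).2).const_smul _⟩

theorem DiffContOnCl.matrix_adjugate [DecidableEq n] {A : ℂ → Matrix n n ℂ}
    (hA : DiffContOnCl ℂ A U) : DiffContOnCl ℂ (fun z => adjugate (A z)) U := by
  rw [diffContOnCl_matrix_iff] at hA ⊢
  intro i j
  simp only [adjugate_apply]
  refine DiffContOnCl.matrix_det (diffContOnCl_matrix_iff.2 fun k l => ?_)
  by_cases hk : k = j
  · subst hk; simp only [updateRow_self]; exact diffContOnCl_const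
  · simp only [updateRow_ne hk]; exact hA k l

end DiffContOnCl

theorem Complex.exists_eq_const_on_sphere_of_inside_outside {u v : ℂ → ℂ}
    (hu : DiffContOnCl ℂ u (ball 0 1)) (hv : DiffContOnCl ℂ (fun z => v z⁻¹) (ball 0 1))
    (h : ∀ z ∈ sphere (0 : ℂ) 1, u z = v z) : ∃ c, ∀ z ∈ sphere (0 : ℂ) 1, v z = c := by
  have hw := hv.star_comp_conj isOpen_ball (preimage_conj_ball_zero 1)
  -- on the circle `v z = v (conj z)⁻¹`, the conjugate of a function holomorphic inside
  have hfr : ∀ z ∈ frontier (ball (0 : ℂ) 1), u z = conj (star (v (conj z)⁻¹)) := by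
    rw [frontier_ball 0 one_ne_zero]
    intro z hz
    rw [star_def, conj_conj, inv_conj_eq_self_of_mem_sphere hz, h z hz]
  obtain ⟨c, hc⟩ := exists_eq_const_on_closure_of_eq_conj_on_frontier isBounded_ball isOpen_ball
    (isConnected_ball one_pos) hu hw hfr
  rw [closure_ball 0 one_ne_zero] at hc
  exact ⟨c, fun z hz => by rw [← h z hz, hc z (sphere_subset_closedBall hz)]⟩

namespace Matrix

theorem exists_eq_const_on_sphere_of_inside_outside {m n : Type*} [Fintype m] [Fintype n]
    {A B : ℂ → Matrix m n ℂ}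
    (hA : DiffContOnCl ℂ A (ball 0 1)) (hB : DiffContOnCl ℂ (fun z => B z⁻¹) (ball 0 1))
    (h : ∀ z ∈ sphere (0 : ℂ) 1, A z = B z) : ∃ C, ∀ z ∈ sphere (0 : ℂ) 1, B z = C := by
  rw [diffContOnCl_matrix_iff] at hA hB
  choose c hc using fun i j => Complex.exists_eq_const_on_sphere_of_inside_outside (hA i j)
    (hB i j) (fun z hz => congrFun (congrFun (h z hz) i) j)
  exact ⟨of c, fun z hz => ext fun i j => hc i j z hz⟩

variable {n R : Type*} [Fintype n] [DecidableEq n] [CommRing R]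

theorem adjugate_mul_mul_of_mul_self_eq_one {J : Matrix n n R} (hJ : J * J = 1)
    (X : Matrix n n R) : adjugate (J * X * J) = J * adjugate X * J := by
  have hdet : J.det * J.det = 1 := by rw [← det_mul, hJ, det_one]
  have hadj : adjugate J = J.det • J := by
    calc adjugate J = adjugate J * J * J := by rw [Matrix.mul_assoc, hJ, Matrix.mul_one]
      _ = J.det • J := by rw [adjugate_mul, smul_mul_assoc, Matrix.one_mul]
  rw [adjugate_mul_distrib, adjugate_mul_distrib, hadj, smul_mul_assoc, mul_smul_comm,
    mul_smul_comm, smul_smul, hdet, one_smul, Matrix.mul_assoc]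

theorem conj_conjTranspose_adjugate_mul_conjTranspose_of_isHermitian [StarRing R]
    {M P J : Matrix n n R} (hM : M.det = 1) (hJ : J * J = 1) (hJH : Jᴴ = J)
    (hherm : (M * J * P).IsHermitian) :
    J * (adjugate M * Pᴴ)ᴴ * J = adjugate M * Pᴴ := by
  have hMH : Mᴴ * (adjugate M)ᴴ = 1 := by
    rw [← conjTranspose_mul, adjugate_mul, hM, one_smul, conjTranspose_one]
  have hsymm : Pᴴ * J * Mᴴ = M * J * P := by
    simpa only [IsHermitian, conjTranspose_mul, hJH, Matrix.mul_assoc] using hherm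
  symm
  calc adjugate M * Pᴴ = adjugate M * (Pᴴ * J * Mᴴ) * (adjugate M)ᴴ * J := by
        simp only [Matrix.mul_assoc]
        rw [← Matrix.mul_assoc Mᴴ, hMH, Matrix.one_mul, hJ, Matrix.mul_one]
    _ = J * (adjugate M * Pᴴ)ᴴ * J := by
        rw [hsymm, conjTranspose_mul, conjTranspose_conjTranspose,
          ← Matrix.mul_assoc (adjugate M), ← Matrix.mul_assoc (adjugate M), adjugate_mul, hM,
          one_smul, Matrix.one_mul]
        simp only [Matrix.mul_assoc]

theorem exists_eq_const_adjugate_mul_conjTranspose_on_sphere {J : Matrix n n ℂ}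
    {Bp Bm : ℂ → Matrix n n ℂ} (hJ : J * J = 1) (hJH : Jᴴ = J)
    (hBp : DiffContOnCl ℂ Bp (ball 0 1)) (hBm : DiffContOnCl ℂ (fun z => Bm z⁻¹) (ball 0 1))
    (hdet : ∀ z ∈ sphere (0 : ℂ) 1, (Bm z).det = 1)
    (hherm : ∀ z ∈ sphere (0 : ℂ) 1, (Bm z * J * Bp z).IsHermitian) :
    ∃ Θ, ∀ z ∈ sphere (0 : ℂ) 1, adjugate (Bm z) * (Bp (conj z)⁻¹)ᴴ = Θ := by
  have hconj := Complex.preimage_conj_ball_zero 1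
  refine exists_eq_const_on_sphere_of_inside_outside
    (A := fun z => J * Bp z * star (adjugate (Bm (conj z)⁻¹)) * J)
    (((diffContOnCl_const.matrix_mul hBp).matrix_mul
      (hBm.matrix_adjugate.star_comp_conj isOpen_ball hconj)).matrix_mul diffContOnCl_const)
    ?_ fun z hz => ?_
  · simp only [map_inv₀, inv_inv]
    exact hBm.matrix_adjugate.matrix_mul (hBp.star_comp_conj isOpen_ball hconj)
  · rw [Complex.inv_conj_eq_self_of_mem_sphere hz,
      ← conj_conjTranspose_adjugate_mul_conjTranspose_of_isHermitian (hdet z hz) hJ hJH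
        (hherm z hz),
      conjTranspose_mul, conjTranspose_conjTranspose, star_eq_conjTranspose]
    simp only [Matrix.mul_assoc]

theorem exists_real_eq_of_conj_diag_one_neg_one {Θ : Matrix (Fin 2) (Fin 2) ℂ}
    (htw : !![1, 0; 0, -1] * Θ * !![1, 0; 0, -1] = Θ)
    (hsymm : !![1, 0; 0, -1] * Θᴴ * !![1, 0; 0, -1] = Θ) (hdet : Θ.det = 1) :
    ∃ k : ℝ, k ≠ 0 ∧ Θ = !![(k : ℂ), 0; 0, (k : ℂ)⁻¹] := by
  have h01 : Θ 0 1 = 0 := by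
    have := congrFun (congrFun htw 0) 1
    simp [mul_apply, vecMul, dotProduct, Fin.sum_univ_two] at this
    linear_combination -this / 2
  have h10 : Θ 1 0 = 0 := by
    have := congrFun (congrFun htw 1) 0
    simp [mul_apply, vecMul, dotProduct, Fin.sum_univ_two] at this
    linear_combination -this / 2
  have hreal : conj (Θ 0 0) = Θ 0 0 := by
    simpa [mul_apply, vecMul, dotProduct, Fin.sum_univ_two] using congrFun (congrFun hsymm 0) 0
  have h11 : Θ 0 0 * Θ 1 1 = 1 := by simpa [det_fin_two, h01, h10] using hdet
  obtain ⟨k, hk⟩ := Complex.conj_eq_iff_real.1 hreal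
  have hk0 : (k : ℂ) ≠ 0 := by rintro h; simp [hk, h] at h11
  refine ⟨k, by exact_mod_cast hk0, ?_⟩
  rw [← eq_inv_of_mul_eq_one_right (hk ▸ h11), ← hk]
  ext i j; fin_cases i <;> fin_cases j <;> simp [h01, h10]

end Matrix

theorem stmt9_general
    (J : Matrix (Fin 2) (Fin 2) ℂ) (hJ : J = !![(1 : ℂ), 0; 0, -1])
    (φ Bp Bm : ℂ → Matrix (Fin 2) (Fin 2) ℂ)
    -- B₊ ∈ (Λ^{+,>0} SL₂ℂ)_σ
    (hBptw : ∀ lam ∈ closedBall (0 : ℂ) 1, -lam ∈ closedBall (0 : ℂ) 1 →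
      Bp (-lam) = J * Bp lam * J)
    (hBphol : ContinuousOn Bp (closedBall (0 : ℂ) 1) ∧
      DifferentiableOn ℂ Bp (ball (0 : ℂ) 1))
    (hBpdet : ∀ lam ∈ closedBall (0 : ℂ) 1, det (Bp lam) = 1)
    -- B₋ ∈ (Λ⁻ SL₂ℂ)_σ : λ ↦ B₋(λ⁻¹) extends holomorphically to the disk
    (hBmtw : ∀ lam ∈ sphere (0 : ℂ) 1, Bm (-lam) = J * Bm lam * J)
    (hBmhol : ContinuousOn (fun lam => Bm lam⁻¹) (closedBall (0 : ℂ) 1) ∧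
      DifferentiableOn ℂ (fun lam => Bm lam⁻¹) (ball (0 : ℂ) 1))
    (hBmdet : ∀ lam ∈ sphere (0 : ℂ) 1, det (Bm lam) = 1)
    -- the Birkhoff factorization of g
    (hfact : ∀ lam ∈ sphere (0 : ℂ) 1,
      (φ ((starRingEnd ℂ lam)⁻¹))ᴴ * J * φ lam = Bm lam * J * Bp lam) :
    ∃ k : ℝ, k ≠ 0 ∧ ∀ lam ∈ sphere (0 : ℂ) 1,
      (Bp ((starRingEnd ℂ lam)⁻¹))ᴴ = Bm lam * !![(k : ℂ), 0; 0, (k : ℂ)⁻¹] := by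
  have hJJ : J * J = 1 := by
    rw [hJ]; ext i j; fin_cases i <;> fin_cases j <;> simp [mul_apply, one_apply]
  have hJH : Jᴴ = J := by
    rw [hJ]; ext i j; fin_cases i <;> fin_cases j <;> simp
  have h1 : (1 : ℂ) ∈ sphere (0 : ℂ) 1 := by simp
  have hherm : ∀ z ∈ sphere (0 : ℂ) 1, (Bm z * J * Bp z).IsHermitian := by
    intro z hz
    rw [← hfact z hz, Complex.inv_conj_eq_self_of_mem_sphere hz]
    exact isHermitian_conjTranspose_mul_mul _ hJH
  obtain ⟨Θ, hΘ⟩ := exists_eq_const_adjugate_mul_conjTranspose_on_sphere hJJ hJH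
    (.mk_ball hBphol.2 hBphol.1) (.mk_ball hBmhol.2 hBmhol.1) hBmdet hherm
  have hΘ1 : adjugate (Bm 1) * (Bp 1)ᴴ = Θ := by simpa using hΘ 1 h1
  have hsymm : J * Θᴴ * J = Θ := by
    rw [← hΘ1]
    exact conj_conjTranspose_adjugate_mul_conjTranspose_of_isHermitian (hBmdet 1 h1) hJJ hJH
      (hherm 1 h1)
  have htwist : J * Θ * J = Θ := by
    have hΘm1 := hΘ (-1) (by simp)
    rw [map_neg, map_one, inv_neg, inv_one, hBmtw 1 h1, hBptw 1 (by simp) (by simp),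
      adjugate_mul_mul_of_mul_self_eq_one hJJ, conjTranspose_mul, conjTranspose_mul, hJH] at hΘm1
    calc J * Θ * J = J * (adjugate (Bm 1) * (Bp 1)ᴴ) * J := by rw [hΘ1]
      _ = Θ := by
        rw [← hΘm1]
        simp only [Matrix.mul_assoc]
        rw [← Matrix.mul_assoc J J, hJJ, Matrix.one_mul]
  have hdet : Θ.det = 1 := by
    rw [← hΘ1, det_mul, det_adjugate, det_conjTranspose, hBmdet 1 h1, hBpdet 1 (by simp)]
    simp
  subst hJ
  obtain ⟨k, hk, rfl⟩ := exists_real_eq_of_conj_diag_one_neg_one htwist hsymm hdet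
  refine ⟨k, hk, fun z hz => ?_⟩
  rw [← hΘ z hz, ← Matrix.mul_assoc, mul_adjugate, hBmdet z hz, one_smul, Matrix.one_mul]

/-- Converse direction: if `g(λ) = conj(φ(1/conj λ))ᵀ diag(1,−1) φ(λ)` admits a Birkhoff
factorization `g = B₋ diag(1,−1) B₊` with `B₊ ∈ (Λ^{+,>0} SL₂ℂ)_σ` and
`B₋ ∈ (Λ⁻ SL₂ℂ)_σ`, then `conj(B₊(1/conj λ))ᵀ = B₋(λ) Θ` for a constant diagonal
matrix `Θ = diag(k, k⁻¹)` with `k ∈ ℝ`, `k ≠ 0`. -/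
theorem stmt9
    (J : Matrix (Fin 2) (Fin 2) ℂ) (hJ : J = !![(1 : ℂ), 0; 0, -1])
    (φ Bp Bm : ℂ → Matrix (Fin 2) (Fin 2) ℂ)
    -- φ ∈ (Λ SL₂ℂ)_σ
    (hφtw : ∀ lam ∈ sphere (0 : ℂ) 1, φ (-lam) = J * φ lam * J)
    (hφdet : ∀ lam ∈ sphere (0 : ℂ) 1, det (φ lam) = 1)
    -- B₊ ∈ (Λ^{+,>0} SL₂ℂ)_σ
    (hBptw : ∀ lam ∈ closedBall (0 : ℂ) 1, -lam ∈ closedBall (0 : ℂ) 1 →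
      Bp (-lam) = J * Bp lam * J)
    (hBphol : ContinuousOn Bp (closedBall (0 : ℂ) 1) ∧
      DifferentiableOn ℂ Bp (ball (0 : ℂ) 1))
    (hBpdet : ∀ lam ∈ closedBall (0 : ℂ) 1, det (Bp lam) = 1)
    (hBp0 : ∃ ρ : ℝ, 0 < ρ ∧ Bp 0 = !![(ρ : ℂ), 0; 0, (ρ : ℂ)⁻¹])
    -- B₋ ∈ (Λ⁻ SL₂ℂ)_σ : λ ↦ B₋(λ⁻¹) extends holomorphically to the disk
    (hBmtw : ∀ lam ∈ sphere (0 : ℂ) 1, Bm (-lam) = J * Bm lam * J)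
    (hBmhol : ContinuousOn (fun lam => Bm lam⁻¹) (closedBall (0 : ℂ) 1) ∧
      DifferentiableOn ℂ (fun lam => Bm lam⁻¹) (ball (0 : ℂ) 1))
    (hBmdet : ∀ lam ∈ sphere (0 : ℂ) 1, det (Bm lam) = 1)
    -- the Birkhoff factorization of g
    (hfact : ∀ lam ∈ sphere (0 : ℂ) 1,
      (φ ((starRingEnd ℂ lam)⁻¹))ᴴ * J * φ lam = Bm lam * J * Bp lam) :
    ∃ k : ℝ, k ≠ 0 ∧ ∀ lam ∈ sphere (0 : ℂ) 1,
      (Bp ((starRingEnd ℂ lam)⁻¹))ᴴ = Bm lam * !![(k : ℂ), 0; 0, (k : ℂ)⁻¹] :=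
  stmt9_general J hJ φ Bp Bm hBptw hBphol hBpdet hBmtw hBmhol hBmdet hfact
end
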